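/- arXiv:2002.12008 — 5 statements merged into one kernel-verified Lean document; each statement's English description precedes it below -/
import Mathlib

section
/- For every integer N ≥ 2 and every real number φ with 0 < φ < π/N, the first-visit generating function of the simple random walk on {0,1,…,N} absorbed at 0 and N, started at N−1 and evaluated at the point N, satisfies ∑_{n≥0} a_n(N−1) · (1/(2·cos φ))^n = sin((N−1)·φ) / sin(N·φ), where the series converges. -/
/-!
For `φ < ψ < π / N`, `h x = sin (x ψ)` is nonnegative on `{0, …, N}` and satisfies
`h (x + 1) + h (x - 1) = 2 cos ψ · h x`, so induction on `n` gives
`a_n(x) · sin (N ψ) ≤ (2 cos ψ)^n · sin (x ψ)`; as `cos ψ < cos φ`, the series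
`S x = ∑ a_n(x) (2 cos φ)^(-n)` converges for every start `x`. Decomposing a path by its first
step gives `S (x + 1) + S (x - 1) = 2 cos φ · S x`, with `S 0 = 0` and `S N = 1`, and the unique
solution of this boundary value problem is `sin (x φ) / sin (N φ)`.
-/

/-- `walkCount N x n` is the number of integer sequences `(s 0, …, s n)` with
`s 0 = x`, `s n = N`, `|s (k+1) - s k| = 1` for all `0 ≤ k < n`, and
`0 < s k < N` for all `0 ≤ k < n`. -/
noncomputable def walkCount (N x n : ℕ) : ℕ :=
  Nat.card {s : Fin (n + 1) → ℤ //
    s 0 = (x : ℤ) ∧ s (Fin.last n) = (N : ℤ) ∧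
    (∀ k : Fin n, |s k.succ - s k.castSucc| = 1) ∧
    (∀ k : Fin n, 0 < s k.castSucc ∧ s k.castSucc < (N : ℤ))}

/-- The condition in `walkCount`, with an integer start so that `x - 1` does not truncate. -/
def IsFirstPassagePath (N : ℕ) (x : ℤ) (n : ℕ) (s : Fin (n + 1) → ℤ) : Prop :=
  s 0 = x ∧ s (Fin.last n) = N ∧
    (∀ k : Fin n, |s k.succ - s k.castSucc| = 1) ∧
    (∀ k : Fin n, 0 < s k.castSucc ∧ s k.castSucc < N)

namespace IsFirstPassagePath

variable {N : ℕ} {x : ℤ} {n : ℕ}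

theorem mem_Icc {s : Fin (n + 1) → ℤ} (hs : IsFirstPassagePath N x n s) (k : Fin (n + 1)) :
    s k ∈ Set.Icc (0 : ℤ) N := by
  induction k using Fin.lastCases with
  | last => simp [hs.2.1]
  | cast k => exact ⟨(hs.2.2.2 k).1.le, (hs.2.2.2 k).2.le⟩

instance : Finite {s // IsFirstPassagePath N x n s} :=
  have := (Set.finite_Icc (0 : ℤ) N).to_subtype
  Finite.of_injective (fun s k => (⟨s.1 k, s.2.mem_Icc k⟩ : Set.Icc (0 : ℤ) N))
    fun _ _ h => Subtype.ext <| funext fun k => congrArg Subtype.val (congrFun h k)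

theorem cons_iff {t : Fin (n + 1) → ℤ} (hx : 0 < x) (hxN : x < N) :
    IsFirstPassagePath N x (n + 1) (Fin.cons x t) ↔
      IsFirstPassagePath N (x + 1) n t ∨ IsFirstPassagePath N (x - 1) n t := by
  have first_step : |t 0 - x| = 1 ↔ t 0 = x + 1 ∨ t 0 = x - 1 := by
    rw [abs_eq zero_le_one]
    omega
  simp only [IsFirstPassagePath, Fin.forall_fin_succ, Fin.cons_zero, ← Fin.succ_last,
    Fin.cons_succ, Fin.castSucc_zero, ← Fin.succ_castSucc, hx, hxN, first_step]
  tauto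

theorem cons_tail {s : Fin (n + 1) → ℤ} (hs : IsFirstPassagePath N x n s) :
    Fin.cons x (Fin.tail s) = s := by
  rw [← hs.1, Fin.cons_self_tail]

def tailEquiv :
    {s // IsFirstPassagePath N x n s} ≃ {t // IsFirstPassagePath N x n (Fin.cons x t)} where
  toFun s := ⟨Fin.tail s.1, by rw [s.2.cons_tail]; exact s.2⟩
  invFun t := ⟨Fin.cons x t.1, t.2⟩
  left_inv s := Subtype.ext s.2.cons_tail
  right_inv t := Subtype.ext (Fin.tail_cons (α := fun _ => ℤ) x t.1)

end IsFirstPassagePath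

theorem walkCount_eq_card (N x n : ℕ) :
    walkCount N x n = Nat.card {s // IsFirstPassagePath N x n s} := rfl

theorem walkCount_zero (N x : ℕ) : walkCount N x 0 = if x = N then 1 else 0 := by
  have key (s : Fin 1 → ℤ) :
      IsFirstPassagePath N x 0 s ↔ s = (fun _ => (x : ℤ)) ∧ x = N := by
    simp only [IsFirstPassagePath, funext_iff, Fin.forall_fin_one, Fin.last_zero,
      IsEmpty.forall_iff, and_true]
    constructor
    · rintro ⟨h₀, hN⟩
      exact ⟨h₀, by omega⟩
    · rintro ⟨h₀, rfl⟩
      exact ⟨h₀, h₀⟩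
  rw [walkCount_eq_card, Nat.card_congr (Equiv.subtypeEquivRight key)]
  split_ifs with h <;> simp [h]

theorem walkCount_succ_eq_zero {N x : ℕ} (n : ℕ) (hx : x = 0 ∨ N ≤ x) :
    walkCount N x (n + 1) = 0 := by
  rw [walkCount_eq_card, Nat.card_eq_zero]
  left
  constructor
  rintro ⟨s, hs⟩
  have := hs.2.2.2 0
  rw [Fin.castSucc_zero, hs.1] at this
  omega

theorem walkCount_add_one_succ {N x : ℕ} (n : ℕ) (hx : x + 1 < N) :
    walkCount N (x + 1) (n + 1) = walkCount N (x + 2) n + walkCount N x n := by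
  classical
  have hx₀ : (0 : ℤ) < (x + 1 : ℕ) := by omega
  have hxN : ((x + 1 : ℕ) : ℤ) < N := by omega
  have up : ((x + 1 : ℕ) : ℤ) + 1 = (x + 2 : ℕ) := by push_cast; ring
  have down : ((x + 1 : ℕ) : ℤ) - 1 = x := by push_cast; ring
  have disj : Disjoint (IsFirstPassagePath N (x + 2 : ℕ) n) (IsFirstPassagePath N x n) := by
    rw [disjoint_iff_inf_le]
    rintro t ⟨h₂, h₀⟩
    have := h₂.1.symm.trans h₀.1
    omega
  rw [walkCount_eq_card, Nat.card_congr IsFirstPassagePath.tailEquiv,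
    Nat.card_congr (Equiv.subtypeEquivRight fun t => IsFirstPassagePath.cons_iff hx₀ hxN),
    up, down, Nat.card_congr (subtypeOrEquiv _ _ disj), Nat.card_sum]
  rfl

theorem walkCount_mul_le_pow_mul {N : ℕ} {h : ℕ → ℝ} {c : ℝ} (hc : 0 ≤ c)
    (h_nonneg : ∀ x ≤ N, 0 ≤ h x)
    (h_super : ∀ x, x + 2 ≤ N → h (x + 2) + h x ≤ c * h (x + 1)) (n : ℕ) :
    ∀ x ≤ N, walkCount N x n * h N ≤ c ^ n * h x := by
  induction n with
  | zero =>
    intro x hx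
    rw [walkCount_zero]
    split_ifs with hxN
    · simp [hxN]
    · simpa using h_nonneg x hx
  | succ n ih =>
    intro x hx
    by_cases hb : x = 0 ∨ N ≤ x
    · rw [walkCount_succ_eq_zero n hb, Nat.cast_zero, zero_mul]
      exact mul_nonneg (pow_nonneg hc _) (h_nonneg x hx)
    obtain ⟨y, rfl⟩ := Nat.exists_eq_add_one_of_ne_zero (by omega : x ≠ 0)
    rw [walkCount_add_one_succ n (by omega), Nat.cast_add]
    calc (walkCount N (y + 2) n + walkCount N y n : ℝ) * h N
        = walkCount N (y + 2) n * h N + walkCount N y n * h N := add_mul _ _ _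
      _ ≤ c ^ n * h (y + 2) + c ^ n * h y := add_le_add (ih _ (by omega)) (ih _ (by omega))
      _ = c ^ n * (h (y + 2) + h y) := (mul_add _ _ _).symm
      _ ≤ c ^ n * (c * h (y + 1)) :=
        mul_le_mul_of_nonneg_left (h_super y (by omega)) (pow_nonneg hc _)
      _ = c ^ (n + 1) * h (y + 1) := by ring

open Real

theorem sin_add_two_mul_add_sin_mul (x θ : ℝ) :
    sin ((x + 2) * θ) + sin (x * θ) = 2 * cos θ * sin ((x + 1) * θ) := by
  rw [sin_add_sin]
  ring_nf

theorem mul_sin_eq_of_recurrence {N : ℕ} {f : ℕ → ℝ} {θ : ℝ} (h₀ : f 0 = 0)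
    (hrec : ∀ x, x + 2 ≤ N → f (x + 2) + f x = 2 * cos θ * f (x + 1))
    (x : ℕ) (hx : x ≤ N) :
    f x * sin θ = f 1 * sin (x * θ) := by
  induction x using Nat.strong_induction_on with
  | _ x ih =>
    rcases x with _ | _ | x
    · simp [h₀]
    · simp
    · have ih₁ := ih (x + 1) (by omega) (by omega)
      have ih₀ := ih x (by omega) (by omega)
      rw [show ((x + 1 + 1 : ℕ) : ℝ) = x + 2 by push_cast; ring]
      push_cast at ih₁
      linear_combination sin θ * hrec x hx + 2 * cos θ * ih₁ - ih₀ -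
        f 1 * sin_add_two_mul_add_sin_mul x θ

theorem eq_sin_div_sin_of_recurrence {N : ℕ} {f : ℕ → ℝ} {θ : ℝ} (hθ : sin θ ≠ 0)
    (hNθ : sin (N * θ) ≠ 0) (h₀ : f 0 = 0) (hN : f N = 1)
    (hrec : ∀ x, x + 2 ≤ N → f (x + 2) + f x = 2 * cos θ * f (x + 1))
    (x : ℕ) (hx : x ≤ N) :
    f x = sin (x * θ) / sin (N * θ) := by
  have hfx := mul_sin_eq_of_recurrence h₀ hrec x hx
  have hf₁ := mul_sin_eq_of_recurrence h₀ hrec N le_rfl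
  rw [hN, one_mul] at hf₁
  rw [eq_div_iff hNθ]
  refine mul_right_cancel₀ hθ ?_
  linear_combination sin (N * θ) * hfx - sin (x * θ) * hf₁

/-- In the notation of the paper, `F_N(x, N | z) = firstPassageGenFun N x (z / 2)`. -/
noncomputable def firstPassageGenFun (N x : ℕ) (w : ℝ) : ℝ :=
  ∑' n, (walkCount N x n : ℝ) * w ^ n

theorem firstPassageGenFun_zero_start {N : ℕ} (hN : N ≠ 0) (w : ℝ) :
    firstPassageGenFun N 0 w = 0 := by
  refine (tsum_congr fun n => ?_).trans tsum_zero
  rcases n with _ | n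
  · simp [walkCount_zero, hN.symm]
  · simp [walkCount_succ_eq_zero n (Or.inl rfl)]

theorem firstPassageGenFun_self (N : ℕ) (w : ℝ) : firstPassageGenFun N N w = 1 := by
  refine (tsum_eq_single 0 fun n hn => ?_).trans (by simp [walkCount_zero])
  obtain ⟨n, rfl⟩ := Nat.exists_eq_add_one_of_ne_zero hn
  simp [walkCount_succ_eq_zero n (Or.inr le_rfl)]

theorem firstPassageGenFun_add_one {N x : ℕ} {w : ℝ} (hx : x + 1 < N)
    (h₂ : Summable fun n => (walkCount N (x + 2) n : ℝ) * w ^ n)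
    (h₀ : Summable fun n => (walkCount N x n : ℝ) * w ^ n) :
    firstPassageGenFun N (x + 1) w =
      w * (firstPassageGenFun N (x + 2) w + firstPassageGenFun N x w) := by
  have hterm :
      (fun n => w * ((walkCount N (x + 2) n : ℝ) * w ^ n + walkCount N x n * w ^ n)) =
        fun n => (walkCount N (x + 1) (n + 1) : ℝ) * w ^ (n + 1) := by
    funext n
    rw [walkCount_add_one_succ n hx]
    push_cast
    ring
  have hshift := (h₂.hasSum.add h₀.hasSum).mul_left w
  rw [hterm, hasSum_nat_add_iff (f := fun n => (walkCount N (x + 1) n : ℝ) * w ^ n) 1,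
    Finset.sum_range_one, walkCount_zero, if_neg hx.ne, Nat.cast_zero, zero_mul,
    add_zero] at hshift
  exact hshift.tsum_eq

theorem summable_walkCount_mul_pow {N : ℕ} (hN : 2 ≤ N) {ψ w : ℝ} (hψ₀ : 0 < ψ)
    (hψ : ψ < π / N) (hw : 0 ≤ w) (hwψ : 2 * cos ψ * w < 1) {x : ℕ} (hx : x ≤ N) :
    Summable fun n => (walkCount N x n : ℝ) * w ^ n := by
  have hN' : (2 : ℝ) ≤ N := by exact_mod_cast hN
  have hNψ : N * ψ < π := by rwa [lt_div_iff₀' (by positivity)] at hψ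
  have hcos : 0 ≤ cos ψ :=
    cos_nonneg_of_neg_pi_div_two_le_of_le (by linarith [pi_pos]) (by nlinarith)
  have hsinN : 0 < sin (N * ψ) := sin_pos_of_pos_of_lt_pi (by positivity) hNψ
  have hbound := walkCount_mul_le_pow_mul (h := fun x => sin (x * ψ)) (c := 2 * cos ψ)
    (by positivity)
    (fun y hy => sin_nonneg_of_nonneg_of_le_pi (by positivity) (le_trans (by gcongr) hNψ.le))
    (fun y _ => by push_cast; exact (sin_add_two_mul_add_sin_mul y ψ).le)
  refine Summable.of_nonneg_of_le (fun n => by positivity) (fun n => ?_)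
    ((summable_geometric_of_lt_one (by positivity) hwψ).mul_left (sin (x * ψ) / sin (N * ψ)))
  rw [mul_pow, div_mul_eq_mul_div, le_div_iff₀ hsinN]
  calc (walkCount N x n : ℝ) * w ^ n * sin (N * ψ)
      = walkCount N x n * sin (N * ψ) * w ^ n := by ring
    _ ≤ (2 * cos ψ) ^ n * sin (x * ψ) * w ^ n :=
        mul_le_mul_of_nonneg_right (hbound n x hx) (pow_nonneg hw n)
    _ = sin (x * ψ) * ((2 * cos ψ) ^ n * w ^ n) := by ring

/-- The first-visit generating function of SRW on `{0,…,N}` absorbed at `0` and `N`,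
started at `N - 1`, evaluated at `z = 1 / cos φ`, equals `sin ((N-1) φ) / sin (N φ)`. -/
theorem firstVisitGenFun_pred (N : ℕ) (hN : 2 ≤ N) (φ : ℝ) (hφ0 : 0 < φ)
    (hφ : φ < Real.pi / N) :
    HasSum (fun n : ℕ => (walkCount N (N - 1) n : ℝ) * (1 / (2 * Real.cos φ)) ^ n)
      (Real.sin (((N : ℝ) - 1) * φ) / Real.sin ((N : ℝ) * φ)) := by
  obtain ⟨ψ, hφψ, hψ⟩ := exists_between hφ
  have hNφ : N * φ < π := by rwa [lt_div_iff₀' (by positivity)] at hφ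
  have hπN : π / N ≤ π / 2 := by gcongr; exact_mod_cast hN
  have hcosφ : 0 < cos φ := cos_pos_of_mem_Ioo ⟨by linarith [pi_pos], by linarith⟩
  have hcos : cos ψ < cos φ := cos_lt_cos_of_nonneg_of_le_pi hφ0.le (by linarith) hφψ
  set w := 1 / (2 * cos φ) with hw
  have hsum (x : ℕ) (hx : x ≤ N) : Summable fun n => (walkCount N x n : ℝ) * w ^ n :=
    summable_walkCount_mul_pow hN (hφ0.trans hφψ) hψ (by positivity)
      (by rw [hw, mul_one_div, div_lt_one (by positivity)]; linarith) hx
  have hrec (x : ℕ) (hx : x + 2 ≤ N) :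
      firstPassageGenFun N (x + 2) w + firstPassageGenFun N x w =
        2 * cos φ * firstPassageGenFun N (x + 1) w := by
    rw [firstPassageGenFun_add_one (by omega) (hsum _ hx) (hsum _ (by omega)), hw]
    field_simp
  have hvalue := eq_sin_div_sin_of_recurrence (f := fun x => firstPassageGenFun N x w)
    (sin_pos_of_pos_of_lt_pi hφ0 (by linarith)).ne'
    (sin_pos_of_pos_of_lt_pi (by positivity) hNφ).ne'
    (firstPassageGenFun_zero_start (by omega) w) (firstPassageGenFun_self N w) hrec
    (N - 1) (by omega)
  rw [Nat.cast_pred (by omega)] at hvalue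
  exact (hsum _ (by omega)).hasSum_iff.mpr hvalue
end

section
/- For every integer N ≥ 1 and every real number φ with 0 < φ < π/(N+1), one has sin(N·φ) / sin((N+1)·φ) ≥ (N/(N+1)) · (1 + (1+2N)·φ²/6). -/
/-!
Write `a = Nφ` and `b = (N+1)φ`. The function `y ↦ sin y · exp (y² / 6) / y` is antitone on
`(0, π)`: its derivative has the sign of `y cos y - sin y + y² sin y / 3`, which vanishes at `0`
and has derivative `(y / 3) (y cos y - sin y) ≤ 0` on `[0, π]`. Comparing its values at `a ≤ b` gives
`sin a / sin b ≥ (a / b) exp ((b² - a²) / 6)`, and `exp t ≥ 1 + t` finishes the proof.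
-/

open Real Set

lemma antitoneOn_of_hasDerivAt_nonpos {D : Set ℝ} (hD : Convex ℝ D) {f f' : ℝ → ℝ}
    (hf : ∀ x ∈ D, HasDerivAt f (f' x) x) (hf' : ∀ x ∈ interior D, f' x ≤ 0) :
    AntitoneOn f D :=
  antitoneOn_of_hasDerivWithinAt_nonpos hD
    (fun x hx ↦ (hf x hx).continuousAt.continuousWithinAt)
    (fun x hx ↦ (hf x (interior_subset hx)).hasDerivWithinAt) hf'

namespace Real

lemma mul_cos_le_sin {x : ℝ} (hx₀ : 0 ≤ x) (hxπ : x ≤ π) : x * cos x ≤ sin x := by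
  rcases lt_or_ge x (π / 2) with hx | hx
  · have hcos : 0 < cos x := cos_pos_of_mem_Ioo ⟨by linarith [pi_pos], hx⟩
    have := le_tan hx₀ hx
    rwa [tan_eq_sin_div_cos, le_div_iff₀ hcos] at this
  · have hcos : cos x ≤ 0 := cos_nonpos_of_pi_div_two_le_of_le hx (by linarith [pi_pos])
    nlinarith [sin_nonneg_of_nonneg_of_le_pi hx₀ hxπ]

lemma mul_cos_sub_sin_add_sq_mul_sin_div_three_nonpos {x : ℝ} (hx₀ : 0 ≤ x) (hxπ : x ≤ π) :
    x * cos x - sin x + x ^ 2 * sin x / 3 ≤ 0 := by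
  let f : ℝ → ℝ := fun y ↦ y * cos y - sin y + y ^ 2 * sin y / 3
  have hf : ∀ y, HasDerivAt f (y / 3 * (y * cos y - sin y)) y := fun y ↦
    ((((hasDerivAt_id y).mul (hasDerivAt_cos y)).sub (hasDerivAt_sin y)).add
      (((hasDerivAt_pow 2 y).mul (hasDerivAt_sin y)).div_const 3)).congr_deriv
        (by simp only [one_mul, id_eq, mul_neg, Nat.cast_ofNat, Nat.add_one_sub_one, pow_one]; ring)
  have hanti : AntitoneOn f (Icc 0 π) := by
    refine antitoneOn_of_hasDerivAt_nonpos (convex_Icc 0 π) (fun y _ ↦ hf y) fun y hy ↦ ?_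
    rw [interior_Icc] at hy
    exact mul_nonpos_of_nonneg_of_nonpos (by linarith [hy.1])
      (by linarith [mul_cos_le_sin hy.1.le hy.2.le])
  simpa [f] using hanti ⟨le_rfl, pi_pos.le⟩ ⟨hx₀, hxπ⟩ hx₀

lemma antitoneOn_sin_mul_exp_div :
    AntitoneOn (fun y ↦ sin y * exp (y ^ 2 / 6) / y) (Ioo 0 π) := by
  refine antitoneOn_of_hasDerivAt_nonpos (convex_Ioo 0 π)
    (f' := fun y ↦ exp (y ^ 2 / 6) * (y * cos y - sin y + y ^ 2 * sin y / 3) / y ^ 2)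
    (fun y hy ↦ ?_) fun y hy ↦ ?_
  · have hexp : HasDerivAt (fun y : ℝ ↦ exp (y ^ 2 / 6)) (exp (y ^ 2 / 6) * (y / 3)) y :=
      ((hasDerivAt_exp _).comp y ((hasDerivAt_pow 2 y).div_const 6)).congr_deriv
        (by simp only [Nat.cast_ofNat, Nat.add_one_sub_one, pow_one]; ring)
    exact (((hasDerivAt_sin y).mul hexp).div (hasDerivAt_id y) hy.1.ne').congr_deriv
      (by simp only [id_eq, Pi.mul_apply, mul_one]; ring)
  · rw [interior_Ioo] at hy
    exact div_nonpos_of_nonpos_of_nonneg (mul_nonpos_of_nonneg_of_nonpos (exp_pos _).le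
      (mul_cos_sub_sin_add_sq_mul_sin_div_three_nonpos hy.1.le hy.2.le)) (sq_nonneg y)

lemma mul_exp_le_sin_div_sin {a b : ℝ} (ha : 0 < a) (hab : a ≤ b) (hb : b < π) :
    a / b * exp ((b ^ 2 - a ^ 2) / 6) ≤ sin a / sin b := by
  have hb₀ : 0 < b := ha.trans_le hab
  have hsb : 0 < sin b := sin_pos_of_pos_of_lt_pi hb₀ hb
  have hg : sin b * exp (b ^ 2 / 6) / b ≤ sin a * exp (a ^ 2 / 6) / a :=
    antitoneOn_sin_mul_exp_div ⟨ha, hab.trans_lt hb⟩ ⟨hb₀, hb⟩ hab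
  rw [div_le_div_iff₀ hb₀ ha] at hg
  rw [sub_div, exp_sub, div_mul_div_comm, div_le_div_iff₀ (by positivity) hsb]
  nlinarith [exp_pos (a ^ 2 / 6)]

lemma div_mul_one_add_le_sin_div_sin {a b : ℝ} (ha : 0 ≤ a) (hab : a ≤ b) (hb : b < π) :
    a / b * (1 + (b ^ 2 - a ^ 2) / 6) ≤ sin a / sin b := by
  rcases ha.eq_or_lt with rfl | ha
  · simp
  calc a / b * (1 + (b ^ 2 - a ^ 2) / 6)
      ≤ a / b * exp ((b ^ 2 - a ^ 2) / 6) := by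
        gcongr
        · exact div_nonneg ha.le (ha.le.trans hab)
        · linarith [add_one_le_exp ((b ^ 2 - a ^ 2) / 6)]
    _ ≤ sin a / sin b := mul_exp_le_sin_div_sin ha hab hb

end Real

theorem sin_ratio_lower_bound_one_general (N : ℕ) (φ : ℝ) (hφ0 : 0 < φ)
    (hφ : φ < Real.pi / ((N : ℝ) + 1)) :
    Real.sin ((N : ℝ) * φ) / Real.sin (((N : ℝ) + 1) * φ) ≥
      ((N : ℝ) / ((N : ℝ) + 1)) * (1 + (1 + 2 * (N : ℝ)) * φ ^ 2 / 6) := by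
  have hb : ((N : ℝ) + 1) * φ < Real.pi := by
    rwa [lt_div_iff₀ (by positivity), mul_comm] at hφ
  calc ((N : ℝ) / ((N : ℝ) + 1)) * (1 + (1 + 2 * (N : ℝ)) * φ ^ 2 / 6)
      = (N * φ) / ((N + 1) * φ) * (1 + (((N + 1) * φ) ^ 2 - (N * φ) ^ 2) / 6) := by
        field_simp
        ring
    _ ≤ Real.sin ((N : ℝ) * φ) / Real.sin (((N : ℝ) + 1) * φ) :=
        Real.div_mul_one_add_le_sin_div_sin (by positivity) (by gcongr; linarith) hb

/-- Lower bound for the generating function `F_{N+1}(N, N+1 | 1/cos φ) = sin(Nφ)/sin((N+1)φ)`. -/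
theorem sin_ratio_lower_bound_one (N : ℕ) (hN : 1 ≤ N) (φ : ℝ) (hφ0 : 0 < φ)
    (hφ : φ < Real.pi / ((N : ℝ) + 1)) :
    Real.sin ((N : ℝ) * φ) / Real.sin (((N : ℝ) + 1) * φ) ≥
      ((N : ℝ) / ((N : ℝ) + 1)) * (1 + (1 + 2 * (N : ℝ)) * φ ^ 2 / 6) :=
  sin_ratio_lower_bound_one_general N φ hφ0 hφ
end

section
/- For every integer N ≥ 1 and every real number φ with 0 < φ < π/(N+1), one has sin(φ) / sin((N+1)·φ) ≥ (1/(N+1)) · (1 + (2N+N²)·φ²/6). -/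
/-!
Write `M = N + 1`. Bounding `sin (M φ)` above by its Taylor polynomial of degree five and
`sin φ` below by that of degree three reduces the claim to a polynomial inequality: the
difference of the two sides is `M³ φ⁵ / 720 · (14 M² - 20 - M² (M² - 1) φ²)`, and the last
factor is nonnegative because `M φ < π` and `π² < 12 ≤ 3 M²`.
-/

open Real

lemma apply_zero_le_of_hasDerivAt_nonneg {f f' : ℝ → ℝ} (hf : ∀ y, HasDerivAt f (f' y) y)
    (hf' : ∀ y, 0 < y → 0 ≤ f' y) {x : ℝ} (hx : 0 ≤ x) : f 0 ≤ f x := by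
  have hmono : MonotoneOn f (Set.Ici 0) := by
    refine monotoneOn_of_hasDerivWithinAt_nonneg (convex_Ici 0)
      (fun y _ ↦ (hf y).continuousAt.continuousWithinAt) (fun y _ ↦ (hf y).hasDerivWithinAt) ?_
    rw [interior_Ici]
    exact hf'
  exact hmono Set.self_mem_Ici hx hx

namespace Real

theorem cos_le_one_sub_sq_div_two_add_pow_four_div (x : ℝ) :
    cos x ≤ 1 - x ^ 2 / 2 + x ^ 4 / 24 := by
  have hnonneg {y : ℝ} (hy : 0 ≤ y) : cos y ≤ 1 - y ^ 2 / 2 + y ^ 4 / 24 := by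
    have := apply_zero_le_of_hasDerivAt_nonneg (f := fun y ↦ 1 - y ^ 2 / 2 + y ^ 4 / 24 - cos y)
      (fun y ↦ ((((hasDerivAt_pow 2 y).div_const 2).const_sub 1).add
        ((hasDerivAt_pow 4 y).div_const 24)).sub (hasDerivAt_cos y))
      (fun y hy ↦ by nlinarith [sin_ge_sub_cube hy.le]) hy
    simp only [cos_zero] at this
    linarith
  have h := hnonneg (abs_nonneg x)
  rwa [cos_abs, sq_abs, Even.pow_abs ⟨2, rfl⟩] at h

theorem sin_le_sub_cube_add_pow_five_div {x : ℝ} (hx : 0 ≤ x) :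
    sin x ≤ x - x ^ 3 / 6 + x ^ 5 / 120 := by
  have := apply_zero_le_of_hasDerivAt_nonneg (f := fun y ↦ y - y ^ 3 / 6 + y ^ 5 / 120 - sin y)
    (fun y ↦ (((hasDerivAt_id y).sub ((hasDerivAt_pow 3 y).div_const 6)).add
      ((hasDerivAt_pow 5 y).div_const 120)).sub (hasDerivAt_sin y))
    (fun y _ ↦ by nlinarith [cos_le_one_sub_sq_div_two_add_pow_four_div y]) hx
  simp only [sin_zero] at this
  linarith

theorem one_add_mul_sq_div_mul_sin_mul_le {M φ : ℝ} (hM : 2 ≤ M) (hφ : 0 < φ)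
    (hMφ : M * φ < π) :
    (1 + (M ^ 2 - 1) * φ ^ 2 / 6) * sin (M * φ) ≤ M * sin φ := by
  have hMφ0 : 0 < M * φ := by positivity
  have hM2 : 4 ≤ M ^ 2 := by nlinarith
  have hpoly : M ^ 2 * (M ^ 2 - 1) * φ ^ 2 ≤ 14 * M ^ 2 - 20 := by
    have hπ : π ^ 2 < 12 := by nlinarith [pi_lt_d2, pi_pos]
    calc M ^ 2 * (M ^ 2 - 1) * φ ^ 2 = (M ^ 2 - 1) * (M * φ) ^ 2 := by ring
      _ ≤ (M ^ 2 - 1) * π ^ 2 := by gcongr; linarith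
      _ ≤ (M ^ 2 - 1) * 12 := by gcongr; linarith
      _ ≤ 14 * M ^ 2 - 20 := by linarith
  have htaylor : (1 + (M ^ 2 - 1) * φ ^ 2 / 6) * (M * φ - (M * φ) ^ 3 / 6 + (M * φ) ^ 5 / 120)
      ≤ M * (φ - φ ^ 3 / 6) := by
    have hid : M * (φ - φ ^ 3 / 6) -
        (1 + (M ^ 2 - 1) * φ ^ 2 / 6) * (M * φ - (M * φ) ^ 3 / 6 + (M * φ) ^ 5 / 120) =
        M ^ 3 * φ ^ 5 / 720 * (14 * M ^ 2 - 20 - M ^ 2 * (M ^ 2 - 1) * φ ^ 2) := by ring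
    have : 0 ≤ M ^ 3 * φ ^ 5 / 720 * (14 * M ^ 2 - 20 - M ^ 2 * (M ^ 2 - 1) * φ ^ 2) :=
      mul_nonneg (by positivity) (by linarith)
    linarith
  have hfactor : 0 ≤ 1 + (M ^ 2 - 1) * φ ^ 2 / 6 := by
    have : 0 ≤ M ^ 2 - 1 := by linarith
    positivity
  calc (1 + (M ^ 2 - 1) * φ ^ 2 / 6) * sin (M * φ)
      ≤ (1 + (M ^ 2 - 1) * φ ^ 2 / 6) * (M * φ - (M * φ) ^ 3 / 6 + (M * φ) ^ 5 / 120) :=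
        mul_le_mul_of_nonneg_left (sin_le_sub_cube_add_pow_five_div hMφ0.le) hfactor
    _ ≤ M * (φ - φ ^ 3 / 6) := htaylor
    _ ≤ M * sin φ := mul_le_mul_of_nonneg_left (sin_ge_sub_cube hφ.le) (by linarith)

theorem one_div_mul_one_add_mul_sq_div_le_sin_div_sin_mul {M φ : ℝ} (hM : 2 ≤ M) (hφ : 0 < φ)
    (hMφ : M * φ < π) :
    1 / M * (1 + (M ^ 2 - 1) * φ ^ 2 / 6) ≤ sin φ / sin (M * φ) := by
  have hM0 : 0 < M := by linarith
  rw [le_div_iff₀ (sin_pos_of_pos_of_lt_pi (by positivity) hMφ)]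
  calc 1 / M * (1 + (M ^ 2 - 1) * φ ^ 2 / 6) * sin (M * φ)
      = (1 + (M ^ 2 - 1) * φ ^ 2 / 6) * sin (M * φ) / M := by ring
    _ ≤ M * sin φ / M :=
        (div_le_div_iff_of_pos_right hM0).2 (one_add_mul_sq_div_mul_sin_mul_le hM hφ hMφ)
    _ = sin φ := by field_simp

end Real

/-- Lower bound for the generating function `F_{N+1}(1, N+1 | 1/cos φ) = sin(φ)/sin((N+1)φ)`. -/
theorem sin_ratio_lower_bound_two (N : ℕ) (hN : 1 ≤ N) (φ : ℝ) (hφ0 : 0 < φ)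
    (hφ : φ < Real.pi / ((N : ℝ) + 1)) :
    Real.sin φ / Real.sin (((N : ℝ) + 1) * φ) ≥
      (1 / ((N : ℝ) + 1)) * (1 + (2 * (N : ℝ) + (N : ℝ) ^ 2) * φ ^ 2 / 6) := by
  have hM : (2 : ℝ) ≤ (N : ℝ) + 1 := by
    have : (1 : ℝ) ≤ N := by exact_mod_cast hN
    linarith
  have hMφ : ((N : ℝ) + 1) * φ < π := by
    rwa [lt_div_iff₀ (by positivity), mul_comm] at hφ
  have hcoeff : 2 * (N : ℝ) + (N : ℝ) ^ 2 = ((N : ℝ) + 1) ^ 2 - 1 := by ring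
  rw [ge_iff_le, hcoeff]
  exact one_div_mul_one_add_mul_sq_div_le_sin_div_sin_mul hM hφ0 hMφ
end

section
/- For every integer N ≥ 1 and every real number φ with 0 < φ < π/(N+1), one has sin(N·φ) / sin((N+1)·φ) ≥ (N/(N+1)) · sinh(φ·√(2N+1)) / (φ·√(2N+1)). -/
/-!
Write `a = Nφ`, `s = φ√(2N+1)`, `b = (N+1)φ`, so that `a² + s² = b²` and `0 < b < π`.
By Euler's products `sin c = c ∏ (1 - c²/(π²j²))` and `sinh s = s ∏ (1 + s²/(π²j²))`, and
factorwise `(1 + v)(1 - w) ≤ 1 - u` whenever `u + v = w` with `v, w ≥ 0`. Hence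
`(sinh s / s) · (sin b / b) ≤ sin a / a`, which rearranges to the claim.
-/

open Filter Finset Real Topology

theorem Real.tendsto_euler_sinh_prod (x : ℝ) :
    Tendsto (fun n : ℕ => π * x * ∏ j ∈ range n, ((1 : ℝ) + x ^ 2 / ((j : ℝ) + 1) ^ 2))
      atTop (𝓝 <| sinh (π * x)) := by
  convert (Complex.continuous_im.tendsto _).comp
    (Complex.tendsto_euler_sin_prod (x * Complex.I)) using 1
  · ext1 n
    have hprod : ∏ j ∈ range n, ((1 : ℂ) - (x * Complex.I) ^ 2 / ((j : ℂ) + 1) ^ 2)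
        = ((∏ j ∈ range n, ((1 : ℝ) + x ^ 2 / ((j : ℝ) + 1) ^ 2) : ℝ) : ℂ) := by
      push_cast
      refine prod_congr rfl fun j _ => ?_
      rw [mul_pow, Complex.I_sq]
      ring
    rw [Function.comp_apply, hprod]
    generalize ∏ j ∈ range n, ((1 : ℝ) + x ^ 2 / ((j : ℝ) + 1) ^ 2) = P
    rw [show (π : ℂ) * (x * Complex.I) * P = ((π * x * P : ℝ) : ℂ) * Complex.I by push_cast; ring,
      Complex.mul_I_im, Complex.ofReal_re]
  · rw [← mul_assoc, ← Complex.ofReal_mul, Complex.sin_mul_I, ← Complex.ofReal_sinh,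
      Complex.mul_I_im, Complex.ofReal_re]

theorem one_add_mul_one_sub_le {u v w : ℝ} (huvw : u + v = w) (hv : 0 ≤ v) (hw : 0 ≤ w) :
    (1 + v) * (1 - w) ≤ 1 - u := by
  nlinarith [mul_nonneg hv hw]

theorem prod_one_add_mul_prod_one_sub_le {x y z : ℝ} (hxyz : x ^ 2 + y ^ 2 = z ^ 2)
    (hz : |z| ≤ 1) (n : ℕ) :
    (∏ j ∈ range n, (1 + y ^ 2 / ((j : ℝ) + 1) ^ 2)) *
        ∏ j ∈ range n, (1 - z ^ 2 / ((j : ℝ) + 1) ^ 2) ≤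
      ∏ j ∈ range n, (1 - x ^ 2 / ((j : ℝ) + 1) ^ 2) := by
  have hz' (j : ℕ) : z ^ 2 / ((j : ℝ) + 1) ^ 2 ≤ 1 :=
    div_le_one_of_le₀ (((sq_le_one_iff_abs_le_one z).2 hz).trans (one_le_pow₀ (by simp)))
      (by positivity)
  rw [← prod_mul_distrib]
  exact prod_le_prod (fun j _ => mul_nonneg (by positivity) (sub_nonneg.2 (hz' j)))
    fun j _ => one_add_mul_one_sub_le (by rw [← add_div, hxyz]) (by positivity) (by positivity)

theorem mul_sinh_mul_sin_le_mul_sin {a s b : ℝ} (hsign : 0 ≤ a * s * b)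
    (hpyth : a ^ 2 + s ^ 2 = b ^ 2) (hb : |b| ≤ π) :
    a * sinh s * sin b ≤ s * b * sin a := by
  have hπ : π ≠ 0 := pi_ne_zero
  have hxyz : (a / π) ^ 2 + (s / π) ^ 2 = (b / π) ^ 2 := by
    rw [div_pow, div_pow, div_pow, ← add_div, hpyth]
  have hz : |b / π| ≤ 1 := by
    rwa [abs_div, abs_of_pos pi_pos, div_le_one pi_pos]
  have hsin (c : ℝ) := tendsto_euler_sin_prod (c / π)
  have hsinh := tendsto_euler_sinh_prod (s / π)
  simp only [mul_div_cancel₀ _ hπ] at hsin hsinh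
  refine le_of_tendsto_of_tendsto' ((hsinh.const_mul a).mul (hsin b))
    ((hsin a).const_mul (s * b)) fun n => ?_
  calc a * (s * _) * (b * _) = a * s * b * (_ * _) := by ring
    _ ≤ a * s * b * _ :=
      mul_le_mul_of_nonneg_left (prod_one_add_mul_prod_one_sub_le hxyz hz n) hsign
    _ = s * b * (a * _) := by ring

theorem sin_ratio_sinh_lower_bound_general (N : ℕ) (φ : ℝ) (hφ0 : 0 < φ)
    (hφ : φ < Real.pi / ((N : ℝ) + 1)) :
    Real.sin ((N : ℝ) * φ) / Real.sin (((N : ℝ) + 1) * φ) ≥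
      ((N : ℝ) / ((N : ℝ) + 1)) *
        (Real.sinh (φ * Real.sqrt (2 * (N : ℝ) + 1)) / (φ * Real.sqrt (2 * (N : ℝ) + 1))) := by
  set s := φ * √(2 * (N : ℝ) + 1) with hs_def
  have hN : (0 : ℝ) < N + 1 := by positivity
  have hb : ((N : ℝ) + 1) * φ < π := (lt_div_iff₀' hN).1 hφ
  have hpyth : ((N : ℝ) * φ) ^ 2 + s ^ 2 = (((N : ℝ) + 1) * φ) ^ 2 := by
    rw [hs_def, mul_pow, mul_pow, sq_sqrt (by positivity)]
    ring
  have key := mul_sinh_mul_sin_le_mul_sin (by positivity) hpyth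
    ((abs_of_pos (by positivity)).trans_lt hb).le
  rw [ge_iff_le, le_div_iff₀ (sin_pos_of_pos_of_lt_pi (by positivity) hb), div_mul_div_comm,
    div_mul_eq_mul_div, div_le_iff₀ (by positivity)]
  exact le_of_mul_le_mul_left (by linarith) hφ0

/-- Intermediate inequality from the infinite product expansion of sine:
`sin(Nφ)/sin((N+1)φ) ≥ (N/(N+1)) · sinh(φ√(2N+1))/(φ√(2N+1))`. -/
theorem sin_ratio_sinh_lower_bound (N : ℕ) (hN : 1 ≤ N) (φ : ℝ) (hφ0 : 0 < φ)
    (hφ : φ < Real.pi / ((N : ℝ) + 1)) :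
    Real.sin ((N : ℝ) * φ) / Real.sin (((N : ℝ) + 1) * φ) ≥
      ((N : ℝ) / ((N : ℝ) + 1)) *
        (Real.sinh (φ * Real.sqrt (2 * (N : ℝ) + 1)) / (φ * Real.sqrt (2 * (N : ℝ) + 1))) :=
  sin_ratio_sinh_lower_bound_general N φ hφ0 hφ
end

section
/- For every real number γ > 0 there exists N₀ ∈ ℕ such that for every natural number N ≥ N₀ the following holds: setting η̄ := 1/cos(γ/(N+1)) − 1 and φ := γ/(N+1), for every integer ℓ > N one has (ℓ·η̄)/(2·(ℓ+1)) + (1/(ℓ+1))² ≤ (1/(N+1))² + (N/3)·φ². -/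
/-!
Since `cos φ ≥ 1 - φ²/2`, for `φ² ≤ 1` the excess `η̄ = 1/cos φ - 1` lies in `[0, φ²]`. So the
first term on the left is at most `η̄/2 ≤ φ²/2 ≤ (N/3)φ²` once `N ≥ 2`, while `(1/(ℓ+1))²` only
decreases in `ℓ`; taking `N ≥ |γ|` makes `φ = γ/(N+1)` small enough.
-/

open Real

namespace Real

lemma half_le_cos_of_sq_le_one {x : ℝ} (hx : x ^ 2 ≤ 1) : 1 / 2 ≤ cos x := by
  linarith [one_sub_sq_div_two_le_cos (x := x)]

lemma one_div_cos_sub_one_nonneg {x : ℝ} (hx : 0 < cos x) : 0 ≤ 1 / cos x - 1 := by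
  rw [sub_nonneg, le_div_iff₀ hx, one_mul]
  exact cos_le_one x

lemma one_div_cos_sub_one_le_sq {x : ℝ} (hx : x ^ 2 ≤ 1) : 1 / cos x - 1 ≤ x ^ 2 := by
  have hcos := half_le_cos_of_sq_le_one hx
  rw [div_sub_one (by positivity), div_le_iff₀ (by positivity)]
  nlinarith [one_sub_sq_div_two_le_cos (x := x), sq_nonneg x]

end Real

lemma mul_div_two_mul_add_one_le_half {a t : ℝ} (ha : 0 ≤ a) (ht : 0 ≤ t) :
    t * a / (2 * (t + 1)) ≤ a / 2 := by
  rw [div_le_div_iff₀ (by positivity) two_pos]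
  nlinarith

theorem stretch_comparison_inequality_general (γ : ℝ) :
    ∃ N₀ : ℕ, ∀ N : ℕ, N₀ ≤ N → ∀ ℓ : ℕ, N < ℓ →
      ((ℓ : ℝ) * (1 / Real.cos (γ / ((N : ℝ) + 1)) - 1)) / (2 * ((ℓ : ℝ) + 1)) +
          (1 / ((ℓ : ℝ) + 1)) ^ 2 ≤
        (1 / ((N : ℝ) + 1)) ^ 2 + ((N : ℝ) / 3) * (γ / ((N : ℝ) + 1)) ^ 2 := by
  refine ⟨max 2 ⌈|γ|⌉₊, fun N hN ℓ hℓ => ?_⟩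
  have hN2 : (2 : ℝ) ≤ N := by exact_mod_cast (le_max_left _ _).trans hN
  have hNγ : |γ| ≤ N := (Nat.le_ceil _).trans (by exact_mod_cast (le_max_right _ _).trans hN)
  have hℓN : (N : ℝ) ≤ ℓ := by exact_mod_cast hℓ.le
  set φ := γ / ((N : ℝ) + 1)
  have hφ : φ ^ 2 ≤ 1 := by
    have hN1 : (0 : ℝ) < N + 1 := by positivity
    rw [sq_le_one_iff_abs_le_one, abs_div, abs_of_pos hN1, div_le_one hN1]
    linarith
  have hη_le := one_div_cos_sub_one_le_sq hφ
  have hη_nonneg := one_div_cos_sub_one_nonneg ((half_le_cos_of_sq_le_one hφ).trans_lt' one_half_pos)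
  calc ((ℓ : ℝ) * (1 / cos φ - 1)) / (2 * ((ℓ : ℝ) + 1)) + (1 / ((ℓ : ℝ) + 1)) ^ 2
      ≤ (1 / cos φ - 1) / 2 + (1 / ((N : ℝ) + 1)) ^ 2 :=
        add_le_add (mul_div_two_mul_add_one_le_half hη_nonneg ℓ.cast_nonneg) (by gcongr)
    _ ≤ (1 / ((N : ℝ) + 1)) ^ 2 + ((N : ℝ) / 3) * φ ^ 2 := by
        nlinarith [sq_nonneg φ]

/-- For every `γ > 0` there is `N₀` such that for all `N ≥ N₀`, with
`η̄ = 1/cos(γ/(N+1)) − 1` and `φ = γ/(N+1)`, for every integer `ℓ > N` one has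
`ℓη̄/(2(ℓ+1)) + (1/(ℓ+1))² ≤ (1/(N+1))² + (N/3)φ²`. -/
theorem stretch_comparison_inequality (γ : ℝ) (hγ : 0 < γ) :
    ∃ N₀ : ℕ, ∀ N : ℕ, N₀ ≤ N → ∀ ℓ : ℕ, N < ℓ →
      ((ℓ : ℝ) * (1 / Real.cos (γ / ((N : ℝ) + 1)) - 1)) / (2 * ((ℓ : ℝ) + 1)) +
          (1 / ((ℓ : ℝ) + 1)) ^ 2 ≤
        (1 / ((N : ℝ) + 1)) ^ 2 + ((N : ℝ) / 3) * (γ / ((N : ℝ) + 1)) ^ 2 :=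
  stretch_comparison_inequality_general γ
end
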